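/- Let A_1, …, A_N be real n×n matrices, τ ≥ 0, and m a positive integer. Suppose there exist symmetric positive definite matrices P_{i,r}, scalars α_{irs} > 0, and scalars γ_{jqirs} ≥ 0 with Σ_{s=1}^m γ_{jqirs} < 1 satisfying: (i) A_i^T P_{i,r} + P_{i,r} A_i ≺ Σ_{s≠r} α_{irs} (P_{i,s} − P_{i,r}) for all i and r, and (ii) exp(A_i^T τ) P_{j,q} exp(A_i τ) ≺ P_{i,r} + Σ_{s≠r} γ_{jqirs} (P_{i,s} − P_{i,r}) for all i ≠ j and all q, r. Define V_i(x) = max_{1≤r≤m} x^T P_{i,r} x. Then for every δ ≥ 0, every pair i ≠ j, and every x ≠ 0: V_j(exp((τ + δ) A_i) x) < V_i(x). -/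

import Mathlib

/-!
Write `y = exp(δ A_i) x`. Along the flow `φ(t) = exp(t A_i) x` of mode `i`, the derivative of
`φᵀ P_{i,r} φ` is `φᵀ (A_iᵀ P_{i,r} + P_{i,r} A_i) φ`, which by (i) is below
`Σ_s α_{irs} (φᵀ P_{i,s} φ - φᵀ P_{i,r} φ)`, hence `≤ 0` whenever `r` realizes the maximum.
A maximum of finitely many differentiable functions, each nonincreasing while it is active,
does not increase; so `V_i(y) ≤ V_i(x)`. At the switch, take `r` active for `V_i` at `y ≠ 0`;
by (ii), for every `q`, `(e^{τA_i} y)ᵀ P_{j,q} (e^{τA_i} y)` is below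
`yᵀ P_{i,r} y + Σ_s γ_{jqirs} (yᵀ P_{i,s} y - yᵀ P_{i,r} y) ≤ V_i(y)`.
-/

open Matrix NormedSpace

/-- The piece-wise quadratic function `V(x) = max_{1 ≤ r ≤ m} xᵀ P_r x`. -/
noncomputable def pwMax {n m : ℕ} (hm : 0 < m)
    (P : Fin m → Matrix (Fin n) (Fin n) ℝ) (x : Fin n → ℝ) : ℝ :=
  Finset.univ.sup' (Finset.univ_nonempty_iff.mpr ⟨⟨0, hm⟩⟩)
    (fun r : Fin m => x ⬝ᵥ P r *ᵥ x)

open Set Filter Topology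

section FiniteMax

variable {ι : Type*} [Fintype ι] [Nonempty ι] {v : ι → ℝ → ℝ} {t : ℝ}

theorem eventually_exists_sup'_eq_of_continuousAt (hv : ∀ r, ContinuousAt (v r) t) :
    ∀ᶠ z in 𝓝 t, ∃ s, v s t = Finset.univ.sup' Finset.univ_nonempty (fun r => v r t) ∧
      Finset.univ.sup' Finset.univ_nonempty (fun r => v r z) = v s z := by
  set f : ℝ → ℝ := fun z => Finset.univ.sup' Finset.univ_nonempty (fun r => v r z)
  obtain ⟨r₀, -, hr₀⟩ := Finset.exists_mem_eq_sup' Finset.univ_nonempty (fun r => v r t)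
  have hinactive : ∀ s, ∀ᶠ z in 𝓝 t, v s t < f t → v s z < v r₀ z := by
    intro s
    by_cases hs : v s t < f t
    · have hlt : v s t < v r₀ t := hr₀ ▸ hs
      exact ((hv s).eventually_lt (hv r₀) hlt).mono fun _ h _ => h
    · exact Eventually.of_forall fun _ h => absurd h hs
  filter_upwards [eventually_all.2 hinactive] with z hz
  obtain ⟨s, -, hs⟩ := Finset.exists_mem_eq_sup' Finset.univ_nonempty (fun r => v r z)
  refine ⟨s, (Finset.le_sup' (fun r => v r t) (Finset.mem_univ s)).eq_or_lt.resolve_right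
    fun hlt => ?_, hs⟩
  have := Finset.le_sup' (fun r => v r z) (Finset.mem_univ r₀)
  exact (hz s hlt).not_ge (hs ▸ this)

theorem sup'_le_sup'_of_hasDerivAt_nonpos {D : ι → ℝ → ℝ}
    (hv : ∀ r t, HasDerivAt (v r) (D r t) t) (hD : ∀ r t, (∀ s, v s t ≤ v r t) → D r t ≤ 0)
    {a b : ℝ} (hab : a ≤ b) :
    Finset.univ.sup' Finset.univ_nonempty (fun r => v r b) ≤
      Finset.univ.sup' Finset.univ_nonempty (fun r => v r a) := by
  set f : ℝ → ℝ := fun z => Finset.univ.sup' Finset.univ_nonempty (fun r => v r z)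
  have hf : Continuous f := Continuous.finset_sup'_apply _ fun r _ =>
    continuous_iff_continuousAt.2 fun t => (hv r t).continuousAt
  refine image_le_of_liminf_slope_right_le_deriv_boundary (B := fun _ => f a) (B' := fun _ => 0)
    hf.continuousOn le_rfl continuousOn_const (fun t _ => hasDerivWithinAt_const t _ _)
    (fun t _ ρ hρ => ?_) (right_mem_Icc.2 hab)
  have hslope : ∀ s, ∀ᶠ z in 𝓝[>] t, v s t = f t → slope (v s) t z < ρ := by
    intro s
    by_cases hs : v s t = f t
    · have hactive : ∀ s', v s' t ≤ v s t := fun s' =>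
        hs ▸ Finset.le_sup' (fun r => v r t) (Finset.mem_univ s')
      exact ((hasDerivAt_iff_tendsto_slope_left_right.1 (hv s t)).2.eventually
        (eventually_lt_nhds ((hD s t hactive).trans_lt hρ))).mono fun _ h _ => h
    · exact Eventually.of_forall fun _ h => absurd h hs
  refine Eventually.frequently ?_
  filter_upwards [eventually_all.2 hslope, nhdsWithin_le_nhds
    (eventually_exists_sup'_eq_of_continuousAt fun r => (hv r t).continuousAt)]
    with z hz ⟨s, hst, hsz⟩
  have : slope f t z = slope (v s) t z := by simp only [slope_def_field, f, hsz, ← hst]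
  exact this ▸ hz s hst

end FiniteMax

section Flow

variable {ι : Type*} [Fintype ι]

theorem HasDerivAt.dotProduct {u w : ℝ → ι → ℝ} {u' w' : ι → ℝ} {t : ℝ}
    (hu : HasDerivAt u u' t) (hw : HasDerivAt w w' t) :
    HasDerivAt (fun t => u t ⬝ᵥ w t) (u' ⬝ᵥ w t + u t ⬝ᵥ w') t := by
  simp only [_root_.dotProduct, ← Finset.sum_add_distrib]
  exact HasDerivAt.fun_sum fun i _ => (hasDerivAt_pi.1 hu i).mul (hasDerivAt_pi.1 hw i)

theorem HasDerivAt.mulVec_left {u : ℝ → ι → ℝ} {u' : ι → ℝ} {t : ℝ} (M : Matrix ι ι ℝ)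
    (hu : HasDerivAt u u' t) : HasDerivAt (fun t => M *ᵥ u t) (M *ᵥ u') t :=
  (LinearMap.toContinuousLinearMap M.mulVecLin).hasFDerivAt.comp_hasDerivAt t hu

variable [DecidableEq ι]

open scoped Norms.Operator in
theorem hasDerivAt_exp_smul_mulVec (A : Matrix ι ι ℝ) (x : ι → ℝ) (t : ℝ) :
    HasDerivAt (fun t => exp (t • A) *ᵥ x) (A *ᵥ (exp (t • A) *ᵥ x)) t := by
  rw [mulVec_mulVec]
  exact (LinearMap.toContinuousLinearMap (LinearMap.applyₗ x ∘ₗ Matrix.toLin'.toLinearMap)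
    ).hasFDerivAt.comp_hasDerivAt t (hasDerivAt_exp_smul_const' A t)

theorem hasDerivAt_dotProduct_mulVec_exp_smul (A P : Matrix ι ι ℝ) (x : ι → ℝ) (t : ℝ) :
    HasDerivAt (fun t => exp (t • A) *ᵥ x ⬝ᵥ P *ᵥ (exp (t • A) *ᵥ x))
      (exp (t • A) *ᵥ x ⬝ᵥ (Aᵀ * P + P * A) *ᵥ (exp (t • A) *ᵥ x)) t := by
  have hφ := hasDerivAt_exp_smul_mulVec A x t
  convert hφ.dotProduct (hφ.mulVec_left P) using 1
  set φ := exp (t • A) *ᵥ x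
  rw [add_mulVec, dotProduct_add, ← mulVec_mulVec, ← mulVec_mulVec, dotProduct_mulVec,
    vecMul_transpose, dotProduct_comm (A *ᵥ φ)]

end Flow

theorem dotProduct_sum_smul_sub_mulVec_nonpos {ι κ : Type*} [Fintype ι] (S : Finset κ)
    (c : κ → ℝ) (hc : ∀ s ∈ S, 0 ≤ c s) (P : κ → Matrix ι ι ℝ) (r : κ) (x : ι → ℝ)
    (hr : ∀ s ∈ S, x ⬝ᵥ P s *ᵥ x ≤ x ⬝ᵥ P r *ᵥ x) :
    x ⬝ᵥ (∑ s ∈ S, c s • (P s - P r)) *ᵥ x ≤ 0 := by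
  rw [sum_mulVec, dotProduct_sum]
  refine Finset.sum_nonpos fun s hs => ?_
  rw [smul_mulVec, dotProduct_smul, sub_mulVec, dotProduct_sub, smul_eq_mul]
  exact mul_nonpos_of_nonneg_of_nonpos (hc s hs) (sub_nonpos.2 (hr s hs))

section PwMax

variable {n m : ℕ} (hm : 0 < m)

theorem le_pwMax (P : Fin m → Matrix (Fin n) (Fin n) ℝ) (x : Fin n → ℝ) (s : Fin m) :
    x ⬝ᵥ P s *ᵥ x ≤ pwMax hm P x :=
  Finset.le_sup' (fun r => x ⬝ᵥ P r *ᵥ x) (Finset.mem_univ s)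

theorem exists_pwMax_eq (P : Fin m → Matrix (Fin n) (Fin n) ℝ) (x : Fin n → ℝ) :
    ∃ r, pwMax hm P x = x ⬝ᵥ P r *ᵥ x := by
  obtain ⟨r, -, hr⟩ := Finset.exists_mem_eq_sup' _ (fun r => x ⬝ᵥ P r *ᵥ x)
  exact ⟨r, hr⟩

theorem pwMax_mulVec_lt_of_posDef (E : Matrix (Fin n) (Fin n) ℝ)
    (P Q : Fin m → Matrix (Fin n) (Fin n) ℝ) (γ : Fin m → Fin m → Fin m → ℝ)
    (hγ : ∀ q r s, 0 ≤ γ q r s)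
    (hjump : ∀ q r, ((P r + ∑ s ∈ Finset.univ.erase r, γ q r s • (P s - P r)) -
      Eᵀ * Q q * E).PosDef)
    {y : Fin n → ℝ} (hy : y ≠ 0) :
    pwMax hm Q (E *ᵥ y) < pwMax hm P y := by
  obtain ⟨r, hr⟩ := exists_pwMax_eq hm P y
  refine (Finset.sup'_lt_iff _).2 fun q _ => ?_
  have hpos : 0 < y ⬝ᵥ ((P r + ∑ s ∈ Finset.univ.erase r, γ q r s • (P s - P r)) -
      Eᵀ * Q q * E) *ᵥ y := by simpa using (hjump q r).dotProduct_mulVec_pos hy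
  have hsum := dotProduct_sum_smul_sub_mulVec_nonpos (Finset.univ.erase r) (γ q r)
    (fun s _ => hγ q r s) P r y fun s _ => hr ▸ le_pwMax hm P y s
  have hconj : E *ᵥ y ⬝ᵥ Q q *ᵥ (E *ᵥ y) = y ⬝ᵥ (Eᵀ * Q q * E) *ᵥ y := by
    rw [← mulVec_mulVec, ← mulVec_mulVec, dotProduct_mulVec y, vecMul_transpose]
  rw [sub_mulVec, add_mulVec, dotProduct_sub, dotProduct_add] at hpos
  linarith

theorem pwMax_exp_smul_mulVec_le (A : Matrix (Fin n) (Fin n) ℝ)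
    (P : Fin m → Matrix (Fin n) (Fin n) ℝ) (α : Fin m → Fin m → ℝ) (hα : ∀ r s, 0 ≤ α r s)
    (hder : ∀ r, ((∑ s ∈ Finset.univ.erase r, α r s • (P s - P r)) -
      (Aᵀ * P r + P r * A)).PosSemidef)
    (x : Fin n → ℝ) {δ : ℝ} (hδ : 0 ≤ δ) :
    pwMax hm P (exp (δ • A) *ᵥ x) ≤ pwMax hm P x := by
  have : Nonempty (Fin m) := ⟨⟨0, hm⟩⟩
  have hactive : ∀ (r : Fin m) (t : ℝ), (∀ s, exp (t • A) *ᵥ x ⬝ᵥ P s *ᵥ (exp (t • A) *ᵥ x) ≤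
      exp (t • A) *ᵥ x ⬝ᵥ P r *ᵥ (exp (t • A) *ᵥ x)) →
      exp (t • A) *ᵥ x ⬝ᵥ (Aᵀ * P r + P r * A) *ᵥ (exp (t • A) *ᵥ x) ≤ 0 := by
    intro r t hr
    set φ := exp (t • A) *ᵥ x
    have hnonneg : 0 ≤ φ ⬝ᵥ ((∑ s ∈ Finset.univ.erase r, α r s • (P s - P r)) -
        (Aᵀ * P r + P r * A)) *ᵥ φ := by simpa using (hder r).dotProduct_mulVec_nonneg φ
    have hsum := dotProduct_sum_smul_sub_mulVec_nonpos (Finset.univ.erase r) (α r)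
      (fun s _ => hα r s) P r φ fun s _ => hr s
    rw [sub_mulVec, dotProduct_sub] at hnonneg
    linarith
  have hflow := sup'_le_sup'_of_hasDerivAt_nonpos
    (fun r t => hasDerivAt_dotProduct_mulVec_exp_smul A (P r) x t) hactive hδ
  simp only [zero_smul, exp_zero, one_mulVec] at hflow
  exact hflow

end PwMax

theorem pwMax_decreases_across_switches_general
    (n N m : ℕ) (hm : 0 < m) (A : Fin N → Matrix (Fin n) (Fin n) ℝ)
    (τ : ℝ)
    (P : Fin N → Fin m → Matrix (Fin n) (Fin n) ℝ)
    (α : Fin N → Fin m → Fin m → ℝ)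
    (γ : Fin N → Fin m → Fin N → Fin m → Fin m → ℝ)
    (hα : ∀ i r s, 0 < α i r s)
    (hγ : ∀ j q i r s, 0 ≤ γ j q i r s)
    (hder : ∀ i r,
      ((∑ s ∈ Finset.univ.erase r, α i r s • (P i s - P i r)) -
        ((A i)ᵀ * P i r + P i r * A i)).PosDef)
    (hjump : ∀ i j, i ≠ j → ∀ q r,
      ((P i r + ∑ s ∈ Finset.univ.erase r, γ j q i r s • (P i s - P i r)) -
        (exp (τ • (A i)ᵀ) * P j q * exp (τ • A i))).PosDef) :
    ∀ δ : ℝ, 0 ≤ δ → ∀ i j : Fin N, i ≠ j → ∀ x : Fin n → ℝ, x ≠ 0 →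
      pwMax hm (P j) (exp ((τ + δ) • A i) *ᵥ x) < pwMax hm (P i) x := by
  intro δ hδ i j hij x hx
  have hinj : Function.Injective (exp (δ • A i)).mulVec :=
    mulVec_injective_iff_isUnit.2 (Matrix.isUnit_exp _)
  have hy : exp (δ • A i) *ᵥ x ≠ 0 := fun h => hx (hinj (h.trans (mulVec_zero _).symm))
  have hsplit : exp ((τ + δ) • A i) *ᵥ x = exp (τ • A i) *ᵥ (exp (δ • A i) *ᵥ x) := by
    rw [mulVec_mulVec, add_smul,
      Matrix.exp_add_of_commute _ _ (((Commute.refl (A i)).smul_left τ).smul_right δ)]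
  have hjump_i : ∀ q r, ((P i r + ∑ s ∈ Finset.univ.erase r, γ j q i r s • (P i s - P i r)) -
      (exp (τ • A i))ᵀ * P j q * exp (τ • A i)).PosDef := by
    simpa only [← transpose_smul, Matrix.exp_transpose] using hjump i j hij
  rw [hsplit]
  calc _ < pwMax hm (P i) (exp (δ • A i) *ᵥ x) :=
        pwMax_mulVec_lt_of_posDef hm _ (P i) (P j) (γ j · i) (fun q r s => hγ j q i r s)
          hjump_i hy
    _ ≤ pwMax hm (P i) x :=
        pwMax_exp_smul_mulVec_le hm (A i) (P i) (α i) (fun r s => (hα i r s).le)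
          (fun r => (hder i r).posSemidef) x hδ

/-- under the BMI dwell-time conditions, the piece-wise quadratic
Lyapunov function strictly decreases across any switch occurring after any elapsed
time of at least `τ`: `V_j(exp((τ+δ)A_i)x) < V_i(x)` for all `δ ≥ 0`, `i ≠ j`, `x ≠ 0`. -/
theorem pwMax_decreases_across_switches
    (n N m : ℕ) (hm : 0 < m) (A : Fin N → Matrix (Fin n) (Fin n) ℝ)
    (τ : ℝ) (hτ : 0 ≤ τ)
    (P : Fin N → Fin m → Matrix (Fin n) (Fin n) ℝ)
    (α : Fin N → Fin m → Fin m → ℝ)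
    (γ : Fin N → Fin m → Fin N → Fin m → Fin m → ℝ)
    (hPsymm : ∀ i r, (P i r).IsSymm)
    (hPpos : ∀ i r, (P i r).PosDef)
    (hα : ∀ i r s, 0 < α i r s)
    (hγ : ∀ j q i r s, 0 ≤ γ j q i r s)
    (hγsum : ∀ j q i r, ∑ s, γ j q i r s < 1)
    (hder : ∀ i r,
      ((∑ s ∈ Finset.univ.erase r, α i r s • (P i s - P i r)) -
        ((A i)ᵀ * P i r + P i r * A i)).PosDef)
    (hjump : ∀ i j, i ≠ j → ∀ q r,
      ((P i r + ∑ s ∈ Finset.univ.erase r, γ j q i r s • (P i s - P i r)) -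
        (exp (τ • (A i)ᵀ) * P j q * exp (τ • A i))).PosDef) :
    ∀ δ : ℝ, 0 ≤ δ → ∀ i j : Fin N, i ≠ j → ∀ x : Fin n → ℝ, x ≠ 0 →
      pwMax hm (P j) (exp ((τ + δ) • A i) *ᵥ x) < pwMax hm (P i) x :=
  pwMax_decreases_across_switches_general n N m hm A τ P α γ hα hγ hder hjump
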